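/- arXiv:0802.0097 — 8 statements merged into one kernel-verified Lean document; each statement's English description precedes it below -/
import Mathlib

section
/- In a complete lattice L, if every element is the supremum of the totally compact elements below it (L is totally algebraic), then the map sending x to the set of totally compact elements below x is a sup-preserving order embedding of L into the lattice of down-closed subsets of the set of totally compact elements of L. -/
/-- Totally compact (supercompact) element of a complete lattice. -/
def TotallyCompact {L : Type*} [CompleteLattice L] (a : L) : Prop :=
  ∀ D : Set L, (∀ x y : L, x ≤ y → y ∈ D → x ∈ D) → a ≤ sSup D → a ∈ D

/-- If `L` is totally algebraic then `x ↦ { a totally compact | a ≤ x }` is a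
sup-preserving order embedding of `L` into the lattice of down-closed subsets of the
set of totally compact elements of `L` (down-closed subsets ordered by inclusion,
suprema given by unions). -/
theorem stmt1 {L : Type*} [CompleteLattice L]
    (halg : ∀ x : L, x = sSup {a : L | TotallyCompact a ∧ a ≤ x}) :
    -- each value is a down-closed subset of the totally compact elements
    (∀ x a b : L, TotallyCompact a → TotallyCompact b → a ≤ b →
      b ∈ {a : L | TotallyCompact a ∧ a ≤ x} → a ∈ {a : L | TotallyCompact a ∧ a ≤ x}) ∧
    -- order embedding (hence injective)
    (∀ x y : L, x ≤ y ↔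
      {a : L | TotallyCompact a ∧ a ≤ x} ⊆ {a : L | TotallyCompact a ∧ a ≤ y}) ∧
    -- sup-preserving: suprema of down-closed subsets are unions
    (∀ S : Set L, {a : L | TotallyCompact a ∧ a ≤ sSup S} =
      ⋃ x ∈ S, {a : L | TotallyCompact a ∧ a ≤ x}) := by
  refine ⟨?_, ?_, ?_⟩
  · intro x a b ha hb hab hbx
    exact ⟨ha, hab.trans hbx.2⟩
  · intro x y
    constructor
    · intro hxy a ⟨ha, hax⟩
      exact ⟨ha, hax.trans hxy⟩
    · intro hsub
      calc x = sSup {a : L | TotallyCompact a ∧ a ≤ x} := halg x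
        _ ≤ sSup {a : L | TotallyCompact a ∧ a ≤ y} := sSup_le_sSup hsub
        _ = y := (halg y).symm
  · intro S
    ext a
    simp only [Set.mem_setOf_eq, Set.mem_iUnion]
    constructor
    · rintro ⟨ha, haS⟩
      have hD : a ∈ {z : L | ∃ x ∈ S, z ≤ x} := by
        apply ha
        · intro u v huv ⟨x, hx, hvx⟩
          exact ⟨x, hx, huv.trans hvx⟩
        · refine haS.trans (sSup_le fun x hx => le_sSup ⟨x, hx, le_rfl⟩)
      obtain ⟨x, hx, hax⟩ := hD
      exact ⟨x, hx, ha, hax⟩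
    · rintro ⟨x, hx, ha, hax⟩
      exact ⟨ha, hax.trans (le_sSup hx)⟩
end

section
/- In a quantaloid, let F be an object and (f_i : R_i → F)_{i∈I} a family of left adjoints with right adjoints f_i*. Suppose the direct sum ⊕_i R_i exists with injections s_i and projections p_i. Let f : F → ⊕_i R_i and f* : ⊕_i R_i → F be the unique factorizations of the f_i* and f_i respectively, i.e. p_j ∘ f = f_j* and f* ∘ s_j = f_j. Then f* ∘ f = ⋁_i (f_i ∘ f_i*) and f ∘ f* ≥ 1. Consequently 1_F = ⋁_i (f_i ∘ f_i*) if and only if the pair (f, f*), with f* ⊣ f, expresses F as an adjoint retract of the direct sum ⊕_i R_i, that is, f* ∘ f = 1_F. -/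
open CategoryTheory

private lemma compL' {C : Type*} [Category C] [∀ X Y : C, CompleteLattice (X ⟶ Y)]
    (hl : ∀ {X Y Z : C} (S : Set (X ⟶ Y)) (g : Y ⟶ Z), sSup S ≫ g = ⨆ f ∈ S, f ≫ g)
    {ι : Type*} {X Y Z : C} (u : ι → (X ⟶ Y)) (g : Y ⟶ Z) :
    (⨆ i, u i) ≫ g = ⨆ i, u i ≫ g := by
  rw [iSup, hl, iSup_range]

private lemma compR' {C : Type*} [Category C] [∀ X Y : C, CompleteLattice (X ⟶ Y)]
    (hr : ∀ {X Y Z : C} (f : X ⟶ Y) (S : Set (Y ⟶ Z)), f ≫ sSup S = ⨆ g ∈ S, f ≫ g)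
    {ι : Type*} {X Y Z : C} (g : X ⟶ Y) (u : ι → (Y ⟶ Z)) :
    g ≫ (⨆ i, u i) = ⨆ i, g ≫ u i := by
  rw [iSup, hr, iSup_range]

private lemma monoL' {C : Type*} [Category C] [∀ X Y : C, CompleteLattice (X ⟶ Y)]
    (hl : ∀ {X Y Z : C} (S : Set (X ⟶ Y)) (g : Y ⟶ Z), sSup S ≫ g = ⨆ f ∈ S, f ≫ g)
    {X Y Z : C} {a b : X ⟶ Y} (g : Y ⟶ Z) (h : a ≤ b) : a ≫ g ≤ b ≫ g := by
  have hb : sSup {x : X ⟶ Y | x ≤ b} = b :=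
    le_antisymm (sSup_le fun x hx => hx) (le_sSup le_rfl)
  calc a ≫ g ≤ ⨆ x ∈ {x : X ⟶ Y | x ≤ b}, x ≫ g :=
        le_iSup₂ (f := fun (x : X ⟶ Y) (_ : x ∈ {x : X ⟶ Y | x ≤ b}) => x ≫ g) a h
    _ = sSup {x : X ⟶ Y | x ≤ b} ≫ g := (hl _ _).symm
    _ = b ≫ g := by rw [hb]

private lemma monoR' {C : Type*} [Category C] [∀ X Y : C, CompleteLattice (X ⟶ Y)]
    (hr : ∀ {X Y Z : C} (f : X ⟶ Y) (S : Set (Y ⟶ Z)), f ≫ sSup S = ⨆ g ∈ S, f ≫ g)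
    {X Y Z : C} (g : X ⟶ Y) {a b : Y ⟶ Z} (h : a ≤ b) : g ≫ a ≤ g ≫ b := by
  have hb : sSup {x : Y ⟶ Z | x ≤ b} = b :=
    le_antisymm (sSup_le fun x hx => hx) (le_sSup le_rfl)
  calc g ≫ a ≤ ⨆ x ∈ {x : Y ⟶ Z | x ≤ b}, g ≫ x :=
        le_iSup₂ (f := fun (x : Y ⟶ Z) (_ : x ∈ {x : Y ⟶ Z | x ≤ b}) => g ≫ x) a h
    _ = g ≫ sSup {x : Y ⟶ Z | x ≤ b} := (hr _ _).symm
    _ = g ≫ b := by rw [hb]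

/-- Lemma on adjoint retracts of direct sums in a quantaloid.  Composition `≫` is
diagrammatic: `a ≫ b` means `b ∘ a`.  The `fi i : R i ⟶ F` are left adjoints with
right adjoints `fs i`; `D` is the direct sum `⊕ᵢ R i` with injections `s i` and
projections `p i`; `f : F ⟶ D` factorizes the `fs i` and `fstar : D ⟶ F` factorizes
the `fi i`.  Then `f* ∘ f = ⋁ᵢ fᵢ ∘ fᵢ*`, `f ∘ f* ≥ 1`, and `1_F = ⋁ᵢ fᵢ ∘ fᵢ*` iff
`(f, fstar)` expresses `F` as an adjoint retract of the direct sum. -/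
theorem stmt8 {C : Type*} [Category C] [∀ X Y : C, CompleteLattice (X ⟶ Y)]
    (hl : ∀ {X Y Z : C} (S : Set (X ⟶ Y)) (g : Y ⟶ Z), sSup S ≫ g = ⨆ f ∈ S, f ≫ g)
    (hr : ∀ {X Y Z : C} (f : X ⟶ Y) (S : Set (Y ⟶ Z)), f ≫ sSup S = ⨆ g ∈ S, f ≫ g)
    {I : Type*} {F : C} {R : I → C}
    (fi : ∀ i, R i ⟶ F) (fs : ∀ i, F ⟶ R i)
    (hadj1 : ∀ i, 𝟙 (R i) ≤ fi i ≫ fs i)      -- 1 ≤ fᵢ* ∘ fᵢ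
    (hadj2 : ∀ i, fs i ≫ fi i ≤ 𝟙 F)          -- fᵢ ∘ fᵢ* ≤ 1
    {D : C} (s : ∀ i, R i ⟶ D) (p : ∀ i, D ⟶ R i)
    (hsp : (⨆ i, p i ≫ s i) = 𝟙 D)            -- ⋁ᵢ sᵢ ∘ pᵢ = 1
    (hps1 : ∀ i, s i ≫ p i = 𝟙 (R i))         -- pᵢ ∘ sᵢ = 1
    (hps2 : ∀ i j, i ≠ j → s i ≫ p j = ⊥)     -- pⱼ ∘ sᵢ = 0 for i ≠ j
    (f : F ⟶ D) (hf : ∀ j, f ≫ p j = fs j)    -- pⱼ ∘ f = fⱼ*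
    (fstar : D ⟶ F) (hfstar : ∀ j, s j ≫ fstar = fi j)  -- f* ∘ sⱼ = fⱼ
    :
    (f ≫ fstar = ⨆ i, fs i ≫ fi i) ∧          -- f* ∘ f = ⋁ᵢ fᵢ ∘ fᵢ*
    (𝟙 D ≤ fstar ≫ f) ∧                        -- f ∘ f* ≥ 1
    ((𝟙 F = ⨆ i, fs i ≫ fi i) ↔
      (f ≫ fstar = 𝟙 F ∧ 𝟙 D ≤ fstar ≫ f ∧ f ≫ fstar ≤ 𝟙 F)) := by
  have hfstar' : fstar = ⨆ i, p i ≫ fi i := by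
    conv_lhs => rw [← Category.id_comp fstar, ← hsp]
    rw [compL' hl]
    simp only [Category.assoc, hfstar]
  have hf' : f = ⨆ i, fs i ≫ s i := by
    conv_lhs => rw [← Category.comp_id f, ← hsp]
    rw [compR' hr]
    simp only [← Category.assoc, hf]
  have h1 : f ≫ fstar = ⨆ i, fs i ≫ fi i := by
    conv_lhs => rw [hfstar']
    rw [compR' hr]
    simp only [← Category.assoc, hf]
  have hle : ∀ i, p i ≫ s i ≤ 𝟙 D := fun i => hsp ▸ le_iSup (fun i => p i ≫ s i) i
  have h2 : 𝟙 D ≤ fstar ≫ f := by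
    rw [← hsp]
    refine iSup_le fun i => ?_
    calc p i ≫ s i = p i ≫ 𝟙 (R i) ≫ s i := by simp
      _ ≤ p i ≫ (fi i ≫ fs i) ≫ s i :=
          monoR' hr (p i) (monoL' hl (s i) (hadj1 i))
      _ = (p i ≫ s i) ≫ fstar ≫ f ≫ (p i ≫ s i) := by
          rw [← hfstar i, ← hf i]; simp only [Category.assoc]
      _ ≤ 𝟙 D ≫ fstar ≫ f ≫ (p i ≫ s i) := monoL' hl _ (hle i)
      _ ≤ 𝟙 D ≫ fstar ≫ f ≫ 𝟙 D :=
          monoR' hr (𝟙 D) (monoR' hr fstar (monoR' hr f (hle i)))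
      _ = fstar ≫ f := by simp
  refine ⟨h1, h2, ?_⟩
  constructor
  · intro h
    exact ⟨h1.trans h.symm, h2, le_of_eq (h1.trans h.symm)⟩
  · rintro ⟨h, -, -⟩
    exact h.symm.trans h1
end

section
/- In a quantaloid, suppose e : E → E and f : F → F are idempotents split as e = i ∘ p with p ∘ i = 1_X and f = j ∘ q with q ∘ j = 1_Y, and let a : E → A with a ∘ e = a and b : F → A with b ∘ f = b. Then q ∘ [b,a] ∘ i = [b ∘ j, a ∘ i], where [−,−] denotes right lifting. -/
open CategoryTheory

/-- In a quantaloid (composition `≫` is diagrammatic, `a ≫ b = b ∘ a`; the right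
lifting `[b,a]` of `a` through `b` is the largest `h` with `b ∘ h ≤ a`, computed as a
supremum since composition preserves suprema): given split idempotents `e = i ∘ p`
(`p ∘ i = 1`) and `f = j ∘ q` (`q ∘ j = 1`) and `a ∘ e = a`, `b ∘ f = b`, one has
`q ∘ [b,a] ∘ i = [b ∘ j, a ∘ i]`. -/
theorem stmt9 {C : Type*} [Category C] [∀ X Y : C, CompleteLattice (X ⟶ Y)]
    (hl : ∀ {X Y Z : C} (S : Set (X ⟶ Y)) (g : Y ⟶ Z), sSup S ≫ g = ⨆ f ∈ S, f ≫ g)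
    (hr : ∀ {X Y Z : C} (f : X ⟶ Y) (S : Set (Y ⟶ Z)), f ≫ sSup S = ⨆ g ∈ S, f ≫ g)
    {E F A X Y : C}
    (e : E ⟶ E) (i : X ⟶ E) (p : E ⟶ X)
    (he : p ≫ i = e) (hpi : i ≫ p = 𝟙 X)       -- e = i ∘ p,  p ∘ i = 1_X
    (f : F ⟶ F) (j : Y ⟶ F) (q : F ⟶ Y)
    (hf : q ≫ j = f) (hqj : j ≫ q = 𝟙 Y)       -- f = j ∘ q,  q ∘ j = 1_Y
    (a : E ⟶ A) (ha : e ≫ a = a)                -- a ∘ e = a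
    (b : F ⟶ A) (hb : f ≫ b = b)                -- b ∘ f = b
    :
    i ≫ (sSup {h : E ⟶ F | h ≫ b ≤ a}) ≫ q =
      sSup {h : X ⟶ Y | h ≫ j ≫ b ≤ i ≫ a} := by
  have monoL : ∀ {X' Y' Z' : C} (g : Y' ⟶ Z') {u v : X' ⟶ Y'}, u ≤ v → u ≫ g ≤ v ≫ g := by
    intro X' Y' Z' g u v huv
    have hSup : sSup ({u, v} : Set (X' ⟶ Y')) = v := by
      rw [sSup_pair, sup_eq_right.mpr huv]
    calc u ≫ g ≤ ⨆ h ∈ ({u, v} : Set (X' ⟶ Y')), h ≫ g := by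
          exact le_biSup (fun h => h ≫ g) (Set.mem_insert _ _)
      _ = sSup ({u, v} : Set (X' ⟶ Y')) ≫ g := (hl _ _).symm
      _ = v ≫ g := by rw [hSup]
  have monoR : ∀ {X' Y' Z' : C} (g : X' ⟶ Y') {u v : Y' ⟶ Z'}, u ≤ v → g ≫ u ≤ g ≫ v := by
    intro X' Y' Z' g u v huv
    have hSup : sSup ({u, v} : Set (Y' ⟶ Z')) = v := by
      rw [sSup_pair, sup_eq_right.mpr huv]
    calc g ≫ u ≤ ⨆ h ∈ ({u, v} : Set (Y' ⟶ Z')), g ≫ h := by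
          exact le_biSup (fun h => g ≫ h) (Set.mem_insert _ _)
      _ = g ≫ sSup ({u, v} : Set (Y' ⟶ Z')) := (hr _ _).symm
      _ = g ≫ v := by rw [hSup]
  apply le_antisymm
  · have h1 : (sSup {h : E ⟶ F | h ≫ b ≤ a}) ≫ q
        = sSup ((fun h : E ⟶ F => h ≫ q) '' {h : E ⟶ F | h ≫ b ≤ a}) := by
      rw [hl, sSup_image]
    rw [h1]
    have h2 : i ≫ sSup ((fun h : E ⟶ F => h ≫ q) '' {h : E ⟶ F | h ≫ b ≤ a})
        = ⨆ g ∈ ((fun h : E ⟶ F => h ≫ q) '' {h : E ⟶ F | h ≫ b ≤ a}), i ≫ g := hr _ _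
    rw [h2]
    apply iSup₂_le
    rintro g ⟨h, hh, rfl⟩
    apply le_sSup
    show (i ≫ h ≫ q) ≫ j ≫ b ≤ i ≫ a
    have : (i ≫ h ≫ q) ≫ j ≫ b = i ≫ h ≫ b := by
      simp only [Category.assoc]
      rw [← Category.assoc q j b, hf, hb]
    rw [this]
    exact monoR i hh
  · apply sSup_le
    intro k hk
    have hkS : p ≫ k ≫ j ∈ {h : E ⟶ F | h ≫ b ≤ a} := by
      show (p ≫ k ≫ j) ≫ b ≤ a
      have : (p ≫ k ≫ j) ≫ b = p ≫ (k ≫ j ≫ b) := by simp only [Category.assoc]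
      rw [this]
      calc p ≫ (k ≫ j ≫ b) ≤ p ≫ (i ≫ a) := monoR p hk
        _ = (p ≫ i) ≫ a := by rw [Category.assoc]
        _ = a := by rw [he, ha]
    have hk' : k = i ≫ (p ≫ k ≫ j) ≫ q := by
      simp only [Category.assoc, hqj, Category.comp_id]
      rw [← Category.assoc i p k, hpi, Category.id_comp]
    rw [hk']
    have h1 : p ≫ k ≫ j ≤ sSup {h : E ⟶ F | h ≫ b ≤ a} := le_sSup hkS
    exact monoR i (monoL q h1)
end

section
/- Let X be a frame and (M, ∘) an X-module. If p ∈ M is locally principal at u ∈ X, then for every m ∈ M, the element p ∘ [p,m] is locally principal at u ∧ [p,m], where [p,m] = ⋁{ x ∈ X : p ∘ x ≤ m }. -/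
/-- `p` is locally principal at `u`: `p ∘ u = p` and the composite `X`-module morphism
`(↓u, ∧) → (M, ∘)`, `v ↦ p ∘ v`, has a right adjoint in the category of `X`-modules.
The right adjoint `r : M → ↓u` is encoded as a map `r : M → X` with values below `u`
which is adjoint, sup-preserving, and equivariant (the action of `x` on `↓u` is `∧ x`). -/
def IsLPAt {X M : Type*} [Order.Frame X] [CompleteLattice M]
    (act : M → X → M) (p : M) (u : X) : Prop :=
  act p u = p ∧ ∃ r : M → X, (∀ m, r m ≤ u) ∧
    (∀ (v : X) (m : M), v ≤ u → (act p v ≤ m ↔ v ≤ r m)) ∧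
    (∀ S : Set M, r (sSup S) = ⨆ m ∈ S, r m) ∧
    (∀ (m : M) (x : X), r (act m x) = r m ⊓ x)

/-- `[p,m] = ⋁{ x : p ∘ x ≤ m }`. -/
def modLift {X M : Type*} [Order.Frame X] [CompleteLattice M]
    (act : M → X → M) (p : M) (m : M) : X :=
  sSup {x : X | act p x ≤ m}

/-- If `p` is locally principal at `u`, then `p ∘ [p,m]` is locally principal at
`u ∧ [p,m]`. -/
theorem stmt11 {X M : Type*} [Order.Frame X] [CompleteLattice M]
    (act : M → X → M)
    (hact1 : ∀ (S : Set M) (x : X), act (sSup S) x = ⨆ m ∈ S, act m x)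
    (hact2 : ∀ (m : M) (S : Set X), act m (sSup S) = ⨆ x ∈ S, act m x)
    (htop : ∀ m : M, act m ⊤ = m)
    (hassoc : ∀ (m : M) (x y : X), act (act m x) y = act m (x ⊓ y))
    (p : M) (u : X) (hp : IsLPAt act p u) :
    ∀ m : M, IsLPAt act (act p (modLift act p m)) (u ⊓ modLift act p m) := by
  obtain ⟨hpu, r, hru, hadj, hrsup, hreq⟩ := hp
  intro m
  set w := modLift act p m with hw
  constructor
  · rw [hassoc]
    have h1 : w ⊓ (u ⊓ w) = u ⊓ w := by
      rw [inf_comm u w, ← inf_assoc, inf_idem]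
    rw [h1]
    calc act p (u ⊓ w) = act (act p u) w := by rw [hassoc]
    _ = act p w := by rw [hpu]
  · refine ⟨fun m' => r m' ⊓ w, fun m' => inf_le_inf_right w (hru m'), ?_, ?_, ?_⟩
    · intro v m' hv
      have hvw : v ≤ w := hv.trans inf_le_right
      have hvu : v ≤ u := hv.trans inf_le_left
      rw [hassoc, inf_eq_right.mpr hvw, hadj v m' hvu, le_inf_iff]
      exact ⟨fun h => ⟨h, hvw⟩, fun h => h.1⟩
    · intro S
      dsimp only
      rw [hrsup, iSup_inf_eq]
      exact iSup_congr fun m' => iSup_inf_eq _ _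
    · intro m' x
      dsimp only
      rw [hreq, inf_right_comm]
end

section
/- Let X be a frame and (M, ∘) a locally principally generated X-module. Then for all m, n ∈ M and x ∈ X: (m ∧ n) ∘ x = m ∧ (n ∘ x). -/
/-- A left adjoint `X`-module morphism `ζ : (↓u, ∧) → (M, ∘)` together with its right
adjoint `ζ*` in the category of `X`-modules.  The map `ζ` is encoded by `z : X → M`
(only values on `↓u` matter) and `ζ*` by `r : M → X` with values below `u`. -/
structure LocalSection {X M : Type*} [Order.Frame X] [CompleteLattice M]
    (act : M → X → M) (u : X) where
  z : X → M
  r : M → X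
  hr_le : ∀ m, r m ≤ u
  adj : ∀ (v : X) (m : M), v ≤ u → (z v ≤ m ↔ v ≤ r m)
  hz_sup : ∀ S : Set X, (∀ v ∈ S, v ≤ u) → z (sSup S) = ⨆ v ∈ S, z v
  hz_equiv : ∀ (v x : X), v ≤ u → z (v ⊓ x) = act (z v) x
  hr_sup : ∀ S : Set M, r (sSup S) = ⨆ m ∈ S, r m
  hr_equiv : ∀ (m : M) (x : X), r (act m x) = r m ⊓ x

/-- In a locally principally generated `X`-module, `(m ∧ n) ∘ x = m ∧ (n ∘ x)`. -/
theorem stmt13 {X M : Type*} [Order.Frame X] [CompleteLattice M]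
    (act : M → X → M)
    (hact1 : ∀ (S : Set M) (x : X), act (sSup S) x = ⨆ m ∈ S, act m x)
    (hact2 : ∀ (m : M) (S : Set X), act m (sSup S) = ⨆ x ∈ S, act m x)
    (htop : ∀ m : M, act m ⊤ = m)
    (hassoc : ∀ (m : M) (x y : X), act (act m x) y = act m (x ⊓ y))
    (hlpg : ∀ m : M, m = ⨆ u : X, ⨆ ζ : LocalSection act u, ζ.z (ζ.r m)) :
    ∀ (m n : M) (x : X), act (m ⊓ n) x = m ⊓ act n x := by
  intro m n x
  have hmono : ∀ {u : X} (ζ : LocalSection act u) {a b : M}, a ≤ b → ζ.r a ≤ ζ.r b := by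
    intro u ζ a b hab
    exact (ζ.adj _ _ (ζ.hr_le a)).1 (le_trans ((ζ.adj _ _ (ζ.hr_le a)).2 le_rfl) hab)
  have hrinf : ∀ {u : X} (ζ : LocalSection act u) (a b : M),
      ζ.r (a ⊓ b) = ζ.r a ⊓ ζ.r b := by
    intro u ζ a b
    have hvu : ζ.r a ⊓ ζ.r b ≤ u := le_trans inf_le_left (ζ.hr_le a)
    apply le_antisymm
    · exact le_inf (hmono ζ inf_le_left) (hmono ζ inf_le_right)
    · exact (ζ.adj _ _ hvu).1
        (le_inf ((ζ.adj _ _ hvu).2 inf_le_left) ((ζ.adj _ _ hvu).2 inf_le_right))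
  have key : ∀ {u : X} (ζ : LocalSection act u),
      ζ.r (act (m ⊓ n) x) = ζ.r (m ⊓ act n x) := by
    intro u ζ
    rw [ζ.hr_equiv, hrinf, hrinf, ζ.hr_equiv, inf_assoc]
  calc act (m ⊓ n) x
      = ⨆ u : X, ⨆ ζ : LocalSection act u, ζ.z (ζ.r (act (m ⊓ n) x)) := hlpg _
    _ = ⨆ u : X, ⨆ ζ : LocalSection act u, ζ.z (ζ.r (m ⊓ act n x)) :=
        iSup_congr fun u => iSup_congr fun ζ => by rw [key ζ]
    _ = m ⊓ act n x := (hlpg _).symm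
end

section
/- Let X be a frame and (M, ∘) a locally principally generated X-module. Then M is a frame (binary meets distribute over arbitrary suprema), and the map f* : X → M, x ↦ ⊤_M ∘ x, preserves finite meets and arbitrary suprema (so is a frame homomorphism), and moreover m ∘ x = m ∧ f*(x) for all m ∈ M, x ∈ X. -/
namespace LocalSection

variable {X M : Type*} [Order.Frame X] [CompleteLattice M] {act : M → X → M} {u : X}

lemma r_mono (ζ : LocalSection act u) {m n : M} (h : m ≤ n) : ζ.r m ≤ ζ.r n := by
  have h2 := ζ.hr_sup {m, n}
  have hmn : sSup {m, n} = n := by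
    rw [sSup_pair, sup_eq_right.2 h]
  rw [hmn] at h2
  have : ζ.r m ≤ ⨆ k ∈ ({m, n} : Set M), ζ.r k :=
    le_iSup₂ (f := fun k _ => ζ.r k) m (by simp)
  rw [← h2] at this
  exact this

lemma z_r_le (ζ : LocalSection act u) (m : M) : ζ.z (ζ.r m) ≤ m :=
  (ζ.adj _ m (ζ.hr_le m)).2 le_rfl

lemma z_mono (ζ : LocalSection act u) {v w : X} (hv : v ≤ w) (hw : w ≤ u) :
    ζ.z v ≤ ζ.z w := by
  have hwr : w ≤ ζ.r (ζ.z w) := (ζ.adj w (ζ.z w) hw).1 le_rfl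
  exact (ζ.adj v (ζ.z w) (hv.trans hw)).2 (hv.trans hwr)

lemma r_inf (ζ : LocalSection act u) (m n : M) : ζ.r (m ⊓ n) = ζ.r m ⊓ ζ.r n := by
  refine le_antisymm (le_inf (ζ.r_mono inf_le_left) (ζ.r_mono inf_le_right)) ?_
  refine (ζ.adj _ (m ⊓ n) ((inf_le_left).trans (ζ.hr_le m))).1 (le_inf ?_ ?_)
  · exact (ζ.z_mono inf_le_left (ζ.hr_le m)).trans (ζ.z_r_le m)
  · exact (ζ.z_mono inf_le_right (ζ.hr_le n)).trans (ζ.z_r_le n)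

end LocalSection

section aux

variable {X M : Type*} [Order.Frame X] [CompleteLattice M] {act : M → X → M}

lemma le_detect (hlpg : ∀ m : M, m = ⨆ u : X, ⨆ ζ : LocalSection act u, ζ.z (ζ.r m))
    {m n : M} (h : ∀ (u : X) (ζ : LocalSection act u), ζ.r m ≤ ζ.r n) : m ≤ n := by
  conv_lhs => rw [hlpg m]
  refine iSup_le fun u => iSup_le fun ζ => ?_
  exact (ζ.adj _ n (ζ.hr_le m)).2 (h u ζ)

lemma eq_detect (hlpg : ∀ m : M, m = ⨆ u : X, ⨆ ζ : LocalSection act u, ζ.z (ζ.r m))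
    {m n : M} (h : ∀ (u : X) (ζ : LocalSection act u), ζ.r m = ζ.r n) : m = n :=
  le_antisymm (le_detect hlpg fun u ζ => (h u ζ).le)
    (le_detect hlpg fun u ζ => (h u ζ).ge)

end aux

/-- A locally principally generated `X`-module `M` is a frame, the map
`f* : x ↦ ⊤ ∘ x` is a frame homomorphism `X → M`, and `m ∘ x = m ∧ f*(x)`. -/
theorem stmt14 {X M : Type*} [Order.Frame X] [CompleteLattice M]
    (act : M → X → M)
    (hact1 : ∀ (S : Set M) (x : X), act (sSup S) x = ⨆ m ∈ S, act m x)
    (hact2 : ∀ (m : M) (S : Set X), act m (sSup S) = ⨆ x ∈ S, act m x)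
    (htop : ∀ m : M, act m ⊤ = m)
    (hassoc : ∀ (m : M) (x y : X), act (act m x) y = act m (x ⊓ y))
    (hlpg : ∀ m : M, m = ⨆ u : X, ⨆ ζ : LocalSection act u, ζ.z (ζ.r m)) :
    -- M is a frame: binary meets distribute over arbitrary suprema
    (∀ (m : M) (S : Set M), m ⊓ sSup S = ⨆ n ∈ S, m ⊓ n) ∧
    -- f* : x ↦ ⊤ ∘ x preserves finite meets and arbitrary suprema
    (∀ x y : X, act ⊤ (x ⊓ y) = act ⊤ x ⊓ act ⊤ y) ∧
    (act (⊤ : M) (⊤ : X) = ⊤) ∧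
    (∀ S : Set X, act ⊤ (sSup S) = ⨆ x ∈ S, act ⊤ x) ∧
    -- the action is recovered from f*
    (∀ (m : M) (x : X), act m x = m ⊓ act ⊤ x) := by
  -- the action is recovered from f*
  have h5 : ∀ (m : M) (x : X), act m x = m ⊓ act ⊤ x := by
    intro m x
    refine eq_detect hlpg fun u ζ => ?_
    rw [ζ.hr_equiv, ζ.r_inf, ζ.hr_equiv]
    have hm : ζ.r m ≤ ζ.r ⊤ := ζ.r_mono le_top
    rw [← inf_assoc, inf_eq_left.2 hm]
  -- frame distributivity
  have h1 : ∀ (m : M) (S : Set M), m ⊓ sSup S = ⨆ n ∈ S, m ⊓ n := by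
    intro m S
    refine le_antisymm (le_detect hlpg fun u ζ => ?_)
      (iSup₂_le fun n hn => le_inf inf_le_left (inf_le_right.trans (le_sSup hn)))
    rw [ζ.r_inf, ζ.hr_sup, inf_iSup₂_eq]
    refine iSup₂_le fun n hn => ?_
    rw [← ζ.r_inf]
    exact ζ.r_mono (le_iSup₂ (f := fun n _ => m ⊓ n) n hn)
  refine ⟨h1, ?_, htop ⊤, fun S => hact2 ⊤ S, h5⟩
  intro x y
  calc act ⊤ (x ⊓ y) = act (act ⊤ x) y := (hassoc ⊤ x y).symm
    _ = act ⊤ x ⊓ act ⊤ y := h5 (act ⊤ x) y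
end

section
/- Let Q be a quantale whose underlying complete lattice is totally algebraic, and let M be a Q-module. If a ∈ M is a principal element and d ∈ Q is totally compact, then a ∘ d is a totally compact element of the complete lattice M. -/
/-- Totally compact (supercompact) element: `a ≤ sSup S` implies `a ≤ s` for some `s ∈ S`. -/
def SupCompact {L : Type*} [CompleteLattice L] (a : L) : Prop :=
  ∀ S : Set L, a ≤ sSup S → ∃ s ∈ S, a ≤ s

/-- For a quantale `Q` with totally algebraic underlying lattice and a `Q`-module `M`,
if `a ∈ M` is principal and `d ∈ Q` is totally compact, then `a ∘ d` is totally
compact in `M`. -/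
theorem stmt18 {Q M : Type*} [CompleteLattice Q] [Monoid Q] [CompleteLattice M]
    (hmul1 : ∀ (S : Set Q) (q : Q), sSup S * q = ⨆ s ∈ S, s * q)
    (hmul2 : ∀ (q : Q) (S : Set Q), q * sSup S = ⨆ s ∈ S, q * s)
    (halg : ∀ q : Q, q = sSup {c : Q | SupCompact c ∧ c ≤ q})
    (act : M → Q → M)
    (hact1 : ∀ (S : Set M) (q : Q), act (sSup S) q = ⨆ m ∈ S, act m q)
    (hact2 : ∀ (m : M) (S : Set Q), act m (sSup S) = ⨆ q ∈ S, act m q)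
    (hone : ∀ m : M, act m 1 = m)
    (hassoc : ∀ (m : M) (q q' : Q), act (act m q) q' = act m (q * q'))
    (a : M)
    (hprin : ∃ g : M → Q, (∀ (q : Q) (m : M), act a q ≤ m ↔ q ≤ g m) ∧
      (∀ S : Set M, g (sSup S) = ⨆ m ∈ S, g m) ∧
      (∀ (m : M) (q : Q), g (act m q) = g m * q))
    (d : Q) (hd : SupCompact d) :
    SupCompact (act a d) := by
  obtain ⟨g, hadj, hgsup, _⟩ := hprin
  intro S hS
  have hdle : d ≤ sSup (g '' S) := by
    have := (hadj d (sSup S)).mp hS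
    rwa [hgsup, ← sSup_image] at this
  obtain ⟨t, ht, hdt⟩ := hd _ hdle
  obtain ⟨m, hm, rfl⟩ := ht
  exact ⟨m, hm, (hadj d m).mpr hdt⟩
end

section
/- Let Q be a quantale with totally algebraic underlying lattice and M a principally generated Q-module (every x ∈ M satisfies x = ⋁{ a ∘ [a,x] : a principal }). Then the underlying complete lattice of M is totally algebraic. -/
/-- `a` is a principal element of the `Q`-module `M`. -/
def Principal {Q M : Type*} [CompleteLattice Q] [Monoid Q] [CompleteLattice M]
    (act : M → Q → M) (a : M) : Prop :=
  ∃ g : M → Q, (∀ (q : Q) (m : M), act a q ≤ m ↔ q ≤ g m) ∧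
    (∀ S : Set M, g (sSup S) = ⨆ m ∈ S, g m) ∧
    (∀ (m : M) (q : Q), g (act m q) = g m * q)

/-- A principally generated module over a quantale with totally algebraic underlying
lattice has a totally algebraic underlying complete lattice. -/
theorem stmt19 {Q M : Type*} [CompleteLattice Q] [Monoid Q] [CompleteLattice M]
    (hmul1 : ∀ (S : Set Q) (q : Q), sSup S * q = ⨆ s ∈ S, s * q)
    (hmul2 : ∀ (q : Q) (S : Set Q), q * sSup S = ⨆ s ∈ S, q * s)
    (halg : ∀ q : Q, q = sSup {c : Q | SupCompact c ∧ c ≤ q})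
    (act : M → Q → M)
    (hact1 : ∀ (S : Set M) (q : Q), act (sSup S) q = ⨆ m ∈ S, act m q)
    (hact2 : ∀ (m : M) (S : Set Q), act m (sSup S) = ⨆ q ∈ S, act m q)
    (hone : ∀ m : M, act m 1 = m)
    (hassoc : ∀ (m : M) (q q' : Q), act (act m q) q' = act m (q * q'))
    (hpg : ∀ x : M, x = sSup {y : M | ∃ a : M, Principal act a ∧
      y = act a (sSup {q : Q | act a q ≤ x})}) :
    ∀ x : M, x = sSup {c : M | SupCompact c ∧ c ≤ x} := by
  intro x
  apply le_antisymm
  · conv_lhs => rw [hpg x]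
    apply sSup_le
    rintro y ⟨a, ⟨g, hadj, hgsup, _⟩, rfl⟩
    set L : Q := sSup {q : Q | act a q ≤ x} with hL
    have hLx : act a L ≤ x := by
      rw [hL, hact2]
      exact iSup₂_le fun q hq => hq
    -- act a of a SupCompact element is SupCompact
    have hcomp : ∀ c : Q, SupCompact c → SupCompact (act a c) := by
      intro c hc S hS
      have h1 : c ≤ g (sSup S) := (hadj c (sSup S)).mp hS
      rw [hgsup, ← sSup_image] at h1
      obtain ⟨_, ⟨m, hm, rfl⟩, hcm⟩ := hc _ h1
      exact ⟨m, hm, (hadj c m).mpr hcm⟩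
    -- monotonicity of act a
    have hmono : ∀ c : Q, c ≤ L → act a c ≤ act a L := fun c hcL =>
      (hadj c _).mpr (hcL.trans ((hadj L _).mp le_rfl))
    calc act a L = act a (sSup {c : Q | SupCompact c ∧ c ≤ L}) := by rw [← halg L]
      _ = ⨆ c ∈ {c : Q | SupCompact c ∧ c ≤ L}, act a c := hact2 a _
      _ ≤ sSup {c : M | SupCompact c ∧ c ≤ x} := by
          apply iSup₂_le
          rintro c ⟨hc, hcL⟩
          exact le_sSup ⟨hcomp c hc, (hmono c hcL).trans hLx⟩
  · exact sSup_le fun c hc => hc.2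
end
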